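/- arXiv:1404.2699 — 7 statements merged into one kernel-verified Lean document; each statement's English description precedes it below -/
import Mathlib

section
/- Let K ≥ 2 be a fixed integer and suppose h(k) > 0 for all k ≥ K. Suppose there exist positive functions A(k), B(k), λ(k), with A(k) < B(k+1) for all k ≥ K, such that (i) A(k) ≤ h(k+1)/h(k) < B(k) for all k ≥ K, and (ii) h(k+2) < λ(k+2) · B(k+1)/(B(k+1) − A(k)) for all k ≥ K. If H_n^{(r)}[h] > 0 for all n ≥ 1 and all r ≥ K−2, then H_n^{(r)}[h] < h(2+r) · ∏_{k=2}^n λ(2k+r) for all n ≥ 2 and all r ≥ K−2. -/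
/-!
Positivity of all leading minors makes every Hankel matrix `H_n = (h(i+j+2+r))` positive
definite, and `H_{n+1}` is `H_n` bordered by the column `b_n = (h(i+n+2+r))_i`, so
`H_{n+1}[h] = H_n[h] · (h(2n+r+2) - b_nᵀ H_n⁻¹ b_n)`. Cauchy–Schwarz for the form `H_n⁻¹`, tested
against the last basis vector, gives `b_nᵀ H_n⁻¹ b_n ≥ h(2n+r+1)² / h(2n+r)`; with the ratio bounds
and the growth condition this makes the Schur complement smaller than `λ(2n+r+2)`, and the bound
follows by telescoping from `H_1[h] = h(2+r)`.
-/

/-- Hankel determinant of size `n` at offset `r`: `det_{1≤i,j≤n} (h (i+j+r))`. -/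
noncomputable def hankel (h : ℕ → ℝ) (n r : ℕ) : ℝ :=
  Matrix.det (Matrix.of fun i j : Fin n => h ((i : ℕ) + (j : ℕ) + 2 + r))

open Matrix

namespace Matrix

variable {m : Type*} [Fintype m] [DecidableEq m]

def border {R : Type*} (A : Matrix m m R) (v : m → R) (d : R) :
    Matrix (m ⊕ Fin 1) (m ⊕ Fin 1) R :=
  fromBlocks A (replicateCol (Fin 1) v) (replicateRow (Fin 1) v) (of fun _ _ => d)

theorem border_schurComplement {R : Type*} [CommRing R] (A : Matrix m m R) (v : m → R) (d : R) :
    (of fun _ _ => d) - replicateRow (Fin 1) v * A⁻¹ * replicateCol (Fin 1) v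
      = diagonal fun _ => d - v ⬝ᵥ A⁻¹ *ᵥ v := by
  rw [Matrix.mul_assoc, ← replicateCol_mulVec, replicateRow_mul_replicateCol]
  ext i j
  fin_cases i; fin_cases j
  rfl

theorem det_border {R : Type*} [CommRing R] (A : Matrix m m R) (v : m → R) (d : R)
    (hA : IsUnit A.det) : (border A v d).det = A.det * (d - v ⬝ᵥ A⁻¹ *ᵥ v) := by
  have := A.invertibleOfIsUnitDet hA
  rw [border, det_fromBlocks₁₁, invOf_eq_nonsing_inv, border_schurComplement, det_diagonal,
    Fin.prod_univ_one]

theorem PosDef.border {A : Matrix m m ℝ} (hA : A.PosDef) (v : m → ℝ) {d : ℝ}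
    (hd : 0 < d - v ⬝ᵥ A⁻¹ *ᵥ v) : (A.border v d).PosDef := by
  have := hA.isUnit.invertible
  have hpsd : (A.border v d).PosSemidef := by
    have hrow : replicateRow (Fin 1) v = (replicateCol (Fin 1) v)ᴴ := by
      rw [conjTranspose_replicateCol, star_trivial]
    rw [Matrix.border, hrow, PosDef.fromBlocks₁₁ _ _ hA, ← hrow, border_schurComplement,
      posSemidef_diagonal_iff]
    exact fun _ => hd.le
  rw [hpsd.posDef_iff_det_ne_zero, det_border A v d hA.det_pos.ne'.isUnit]
  exact mul_ne_zero hA.det_pos.ne' hd.ne'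

theorem PosDef.sq_dotProduct_le {A : Matrix m m ℝ} (hA : A.PosDef) (x v : m → ℝ) :
    (x ⬝ᵥ v) ^ 2 ≤ (v ⬝ᵥ A⁻¹ *ᵥ v) * (x ⬝ᵥ A *ᵥ x) := by
  have hdet : IsUnit A.det := hA.det_pos.ne'.isUnit
  have hsymm : Aᵀ = A := by simpa using hA.isHermitian.eq
  have hinv := hA.inv.posSemidef
  have hCS := (toBilin' A⁻¹).apply_mul_apply_le_of_forall_zero_le
    (fun y => by simpa [toBilin'_apply'] using hinv.dotProduct_mulVec_nonneg y) v (A *ᵥ x)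
  have hleft : A⁻¹ *ᵥ A *ᵥ x = x := by
    rw [mulVec_mulVec, nonsing_inv_mul _ hdet, one_mulVec]
  have hright : A *ᵥ x ⬝ᵥ A⁻¹ *ᵥ v = x ⬝ᵥ v := by
    rw [dotProduct_comm, dotProduct_mulVec, ← mulVec_transpose, hsymm, mulVec_mulVec,
      mul_nonsing_inv _ hdet, one_mulVec, dotProduct_comm]
  rw [toBilin'_apply', toBilin'_apply', toBilin'_apply', toBilin'_apply', hleft, hright,
    dotProduct_comm v x, dotProduct_comm (A *ᵥ x)] at hCS
  rwa [sq]

end Matrix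

noncomputable def hankelMatrix (h : ℕ → ℝ) (n r : ℕ) : Matrix (Fin n) (Fin n) ℝ :=
  of fun i j => h (i + j + 2 + r)

noncomputable def hankelColumn (h : ℕ → ℝ) (n r : ℕ) : Fin n → ℝ :=
  fun i => h (i + n + 2 + r)

section Hankel

variable (h : ℕ → ℝ) (r : ℕ)

theorem hankel_eq_det (n : ℕ) : hankel h n r = (hankelMatrix h n r).det := rfl

theorem hankel_one : hankel h 1 r = h (2 + r) := by
  simp [hankel_eq_det, hankelMatrix]

theorem hankelMatrix_succ_submatrix (m : ℕ) :
    (hankelMatrix h (m + 1) r).submatrix finSumFinEquiv finSumFinEquiv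
      = (hankelMatrix h m r).border (hankelColumn h m r) (h (2 * m + r + 2)) := by
  ext (i | i) (j | j) <;>
    simp only [border, hankelMatrix, hankelColumn, submatrix_apply, finSumFinEquiv_apply_left,
      finSumFinEquiv_apply_right, fromBlocks_apply₁₁, fromBlocks_apply₁₂, fromBlocks_apply₂₁,
      fromBlocks_apply₂₂, replicateCol_apply, replicateRow_apply, of_apply, Fin.val_castAdd,
      Fin.val_natAdd] <;>
    congr 1 <;> omega

theorem hankel_succ (m : ℕ) (hH : (hankelMatrix h m r).PosDef) :
    hankel h (m + 1) r = hankel h m r *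
      (h (2 * m + r + 2) - hankelColumn h m r ⬝ᵥ (hankelMatrix h m r)⁻¹ *ᵥ hankelColumn h m r) := by
  rw [hankel_eq_det, ← det_submatrix_equiv_self finSumFinEquiv, hankelMatrix_succ_submatrix,
    det_border _ _ _ hH.det_pos.ne'.isUnit, hankel_eq_det]

theorem posDef_hankelMatrix (hH : ∀ n ≥ 1, 0 < hankel h n r) (n : ℕ) :
    (hankelMatrix h n r).PosDef := by
  induction n with
  | zero => exact ⟨by ext i; exact i.elim0, fun x hx => (hx (Subsingleton.elim _ _)).elim⟩
  | succ m ih =>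
    have hschur : 0 < h (2 * m + r + 2)
        - hankelColumn h m r ⬝ᵥ (hankelMatrix h m r)⁻¹ *ᵥ hankelColumn h m r := by
      have := hH (m + 1) m.succ_pos
      rw [hankel_succ h r m ih] at this
      exact pos_of_mul_pos_right this ih.det_pos.le
    have := (ih.border _ hschur).submatrix finSumFinEquiv.symm.injective
    rwa [← hankelMatrix_succ_submatrix, submatrix_submatrix, Equiv.self_comp_symm,
      submatrix_id_id] at this

theorem sq_div_le_hankelColumn_inv_quad {m : ℕ} (hm : 0 < m) (hH : (hankelMatrix h m r).PosDef) :
    h (2 * m + r + 1) ^ 2 / h (2 * m + r)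
      ≤ hankelColumn h m r ⬝ᵥ (hankelMatrix h m r)⁻¹ *ᵥ hankelColumn h m r := by
  set l : Fin m := ⟨m - 1, by omega⟩
  have hcol : hankelColumn h m r l = h (2 * m + r + 1) := by
    simp only [hankelColumn, l]
    congr 1
    omega
  have hdiag : hankelMatrix h m r l l = h (2 * m + r) := by
    simp only [hankelMatrix, of_apply, l]
    congr 1
    omega
  have hCS := hH.sq_dotProduct_le (Pi.single l 1) (hankelColumn h m r)
  simp only [single_dotProduct, one_mul, mulVec_single, MulOpposite.op_one, one_smul, col_apply]
    at hCS
  rw [hcol, hdiag] at hCS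
  rw [div_le_iff₀ (hdiag ▸ hH.diag_pos)]
  exact hCS

end Hankel

theorem sub_lt_of_ratio_bounds {x y z a b l q : ℝ} (hx : 0 < x) (hy : 0 < y) (hz : 0 < z)
    (hab : a < b) (hlow : a ≤ y / x) (hup : z / y < b) (hgrowth : z < l * (b / (b - a)))
    (hq : y ^ 2 / x ≤ q) : z - q < l := by
  have hb : 0 < b := (div_pos hz hy).trans hup
  have hzy : z < b * y := (div_lt_iff₀ hy).mp hup
  have hay : a * y ≤ q := calc
    a * y ≤ y / x * y := mul_le_mul_of_nonneg_right hlow hy.le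
    _ = y ^ 2 / x := by ring
    _ ≤ q := hq
  have hq0 : 0 ≤ q := (div_nonneg (sq_nonneg y) hx.le).trans hq
  -- for `a > 0` use `z < b * y` and `a * y ≤ q`; for `a ≤ 0` just `q ≥ 0`
  have haz : a * z ≤ b * q := by
    rcases le_or_gt a 0 with ha | ha <;> nlinarith
  have hzl : z * (b - a) < l * b := by
    rwa [mul_div_assoc', lt_div_iff₀ (sub_pos.2 hab)] at hgrowth
  exact lt_of_mul_lt_mul_left (by linarith : b * (z - q) < b * l) hb.le

theorem hankel_succ_lt {h A B lam : ℕ → ℝ} {K r : ℕ} (hpos : ∀ k ≥ K, 0 < h k)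
    (hAB : ∀ k ≥ K, A k < B (k + 1))
    (hratio : ∀ k ≥ K, A k ≤ h (k + 1) / h k ∧ h (k + 1) / h k < B k)
    (hgrowth : ∀ k ≥ K, h (k + 2) < lam (k + 2) * (B (k + 1) / (B (k + 1) - A k)))
    (hH : ∀ n ≥ 1, 0 < hankel h n r) (hr : K ≤ r + 2) {m : ℕ} (hm : 1 ≤ m) :
    hankel h (m + 1) r < lam (2 * (m + 1) + r) * hankel h m r := by
  have hHm := posDef_hankelMatrix h r hH m
  set k := 2 * m + r
  have hk : K ≤ k := by omega
  rw [hankel_succ h r m hHm, mul_comm, show 2 * (m + 1) + r = k + 2 by omega]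
  refine mul_lt_mul_of_pos_right ?_ (hH m hm)
  exact sub_lt_of_ratio_bounds (hpos k hk) (hpos (k + 1) (by omega)) (hpos (k + 2) (by omega))
    (hAB k hk) (hratio k hk).1 (hratio (k + 1) (by omega)).2 (hgrowth k hk)
    (sq_div_le_hankelColumn_inv_quad h r (by omega) hHm)

theorem lt_mul_prod_Icc_of_lt_mul {f c : ℕ → ℝ} (hf : ∀ n ≥ 1, 0 < f n)
    (hstep : ∀ n ≥ 1, f (n + 1) < c (n + 1) * f n) {n : ℕ} (hn : 2 ≤ n) :
    f n < f 1 * ∏ k ∈ Finset.Icc 2 n, c k := by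
  induction n, hn using Nat.le_induction with
  | base => simpa [mul_comm] using hstep 1 le_rfl
  | succ n hn ih =>
    have hc : 0 < c (n + 1) :=
      pos_of_mul_pos_left ((hf (n + 1) (by omega)).trans (hstep n (by omega))) (hf n (by omega)).le
    calc f (n + 1) < c (n + 1) * f n := hstep n (by omega)
      _ < c (n + 1) * (f 1 * ∏ k ∈ Finset.Icc 2 n, c k) := mul_lt_mul_of_pos_left ih hc
      _ = f 1 * ∏ k ∈ Finset.Icc 2 (n + 1), c k := by
        rw [Finset.prod_Icc_succ_top (by omega)]
        ring

theorem hankel_upper_bound_general (h A B lam : ℕ → ℝ) (K : ℕ)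
    (hpos : ∀ k ≥ K, 0 < h k)
    (hAB : ∀ k ≥ K, A k < B (k + 1))
    (hratio : ∀ k ≥ K, A k ≤ h (k + 1) / h k ∧ h (k + 1) / h k < B k)
    (hgrowth : ∀ k ≥ K, h (k + 2) < lam (k + 2) * (B (k + 1) / (B (k + 1) - A k)))
    (hHpos : ∀ n ≥ 1, ∀ r ≥ K - 2, 0 < hankel h n r) :
    ∀ n ≥ 2, ∀ r ≥ K - 2,
      hankel h n r < h (2 + r) * ∏ k ∈ Finset.Icc 2 n, lam (2 * k + r) := by
  intro n hn r hr
  have hH : ∀ n ≥ 1, 0 < hankel h n r := fun n hn => hHpos n hn r hr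
  rw [← hankel_one h r]
  exact lt_mul_prod_Icc_of_lt_mul (f := (hankel h · r)) hH
    (fun m hm => hankel_succ_lt hpos hAB hratio hgrowth hH (by omega) hm) hn

theorem hankel_upper_bound (h A B lam : ℕ → ℝ) (K : ℕ) (hK : 2 ≤ K)
    (hpos : ∀ k ≥ K, 0 < h k)
    (hApos : ∀ k ≥ K, 0 < A k) (hBpos : ∀ k ≥ K, 0 < B k) (hlampos : ∀ k ≥ K, 0 < lam k)
    (hAB : ∀ k ≥ K, A k < B (k + 1))
    (hratio : ∀ k ≥ K, A k ≤ h (k + 1) / h k ∧ h (k + 1) / h k < B k)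
    (hgrowth : ∀ k ≥ K, h (k + 2) < lam (k + 2) * (B (k + 1) / (B (k + 1) - A k)))
    (hHpos : ∀ n ≥ 1, ∀ r ≥ K - 2, 0 < hankel h n r) :
    ∀ n ≥ 2, ∀ r ≥ K - 2,
      hankel h n r < h (2 + r) * ∏ k ∈ Finset.Icc 2 n, lam (2 * k + r) :=
  hankel_upper_bound_general h A B lam K hpos hAB hratio hgrowth hHpos
end

section
/- Let F(s) = Σ_{n≥1} f(n) n^{-s} be an ordinary Dirichlet series with f(n) ≥ 0 for all n, convergent for Re(s) ≥ s₀, such that infinitely many f(n) are nonzero. Then H_n^{(r)}[F] > 0 for all n ≥ 1 and all r ≥ s₀ − 2. -/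
/-!
For `r` fixed, `F (k + 2 + r) = ∑ₘ cₘ tₘ ^ k` with nodes `tₘ = 1 / (m + 1)` and weights
`cₘ = f (m + 1) / (m + 1) ^ (2 + r) ≥ 0`, so the Hankel matrix is the moment matrix of a discrete
measure. Its quadratic form at `x` is `∑ₘ cₘ P(tₘ)²` with `P = ∑ᵢ xᵢ Xⁱ`; since infinitely many
weights are positive and `P ≠ 0` has finitely many roots, some term is positive. The matrix is
therefore positive definite, and its determinant is positive.
-/

/-- Hankel determinant (integer offset) of size `n` at offset `r`:
`det_{1≤i,j≤n} (F (i+j+r))`. -/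
noncomputable def hankelZ (F : ℤ → ℝ) (n : ℕ) (r : ℤ) : ℝ :=
  Matrix.det (Matrix.of fun i j : Fin n => F (((i : ℕ) : ℤ) + ((j : ℕ) : ℤ) + 2 + r))

open Polynomial in
theorem finite_setOf_sum_mul_pow_eq_zero {R : Type*} [CommRing R] [IsDomain R] {n : ℕ}
    {x : Fin n → R} (hx : x ≠ 0) : {y : R | ∑ i, x i * y ^ (i : ℕ) = 0}.Finite := by
  set P : R[X] := ∑ i, C (x i) * X ^ (i : ℕ)
  have hcoeff (i : Fin n) : P.coeff i = x i := by
    simp [P, coeff_X_pow, Fin.val_eq_val]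
  have hP : P ≠ 0 := by
    obtain ⟨i, hi⟩ := Function.ne_iff.mp hx
    exact fun h => hi (by rw [← hcoeff i, h, coeff_zero, Pi.zero_apply])
  convert finite_setOfPred_isRoot hP using 2
  simp [P, eval_finsetSum]

section MomentHankel

open Matrix

variable {α : Type*} (c t : α → ℝ)

noncomputable def momentHankel (n : ℕ) : Matrix (Fin n) (Fin n) ℝ :=
  Matrix.of fun i j => ∑' a, c a * t a ^ ((i : ℕ) + j)

variable {c t}

theorem hasSum_dotProduct_momentHankel_mulVec (hsum : ∀ k : ℕ, Summable fun a => c a * t a ^ k)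
    {n : ℕ} (x : Fin n → ℝ) :
    HasSum (fun a => c a * (∑ i, x i * t a ^ (i : ℕ)) ^ 2)
      (x ⬝ᵥ (momentHankel c t n *ᵥ x)) := by
  have hterm (a : α) : c a * (∑ i, x i * t a ^ (i : ℕ)) ^ 2 =
      ∑ i, ∑ j, x i * x j * (c a * t a ^ ((i : ℕ) + j)) := by
    rw [sq, Finset.sum_mul_sum, Finset.mul_sum]
    refine Finset.sum_congr rfl fun i _ => ?_
    rw [Finset.mul_sum]
    refine Finset.sum_congr rfl fun j _ => ?_
    ring
  simp only [hterm, dotProduct, mulVec, momentHankel, Finset.mul_sum]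
  refine hasSum_sum fun i _ => hasSum_sum fun j _ => ?_
  rw [of_apply, mul_left_comm, mul_comm (∑' _, _)]
  exact (hsum _).hasSum.mul_left _

theorem posDef_momentHankel (hc : 0 ≤ c) (ht : Function.Injective t)
    (hsupp : (Function.support c).Infinite) (hsum : ∀ k : ℕ, Summable fun a => c a * t a ^ k)
    (n : ℕ) : (momentHankel c t n).PosDef := by
  rw [Matrix.posDef_iff_dotProduct_mulVec]
  refine ⟨?_, fun x hx => ?_⟩
  · ext i j
    simp [momentHankel, add_comm]
  · obtain ⟨a, hca, hPa⟩ :=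
      (hsupp.sdiff ((finite_setOf_sum_mul_pow_eq_zero hx).preimage ht.injOn)).nonempty
    have hpos : 0 < c a * (∑ i, x i * t a ^ (i : ℕ)) ^ 2 :=
      mul_pos ((hc a).lt_of_ne' hca) (sq_pos_of_ne_zero hPa)
    rw [star_trivial]
    exact hpos.trans_le <| le_hasSum (hasSum_dotProduct_momentHankel_mulVec hsum x) a
      fun b _ => mul_nonneg (hc b) (sq_nonneg _)

end MomentHankel

theorem div_zpow_natCast_add {K : Type*} [Field K] (a : K) {b : K} (hb : b ≠ 0) (k : ℕ) (e : ℤ) :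
    a / b ^ ((k : ℤ) + e) = a / b ^ e * b⁻¹ ^ k := by
  rw [zpow_add₀ hb, zpow_natCast, inv_pow]
  ring

theorem infinite_support_comp_succ {M : Type*} [Zero M] {f : ℕ → M}
    (hf : (Function.support f).Infinite) : (Function.support fun m => f (m + 1)).Infinite := by
  refine fun hfin => hf (((hfin.image Nat.succ).insert 0).subset ?_)
  rintro (_ | m) hm
  · exact Set.mem_insert 0 _
  · exact Set.mem_insert_of_mem 0 ⟨m, hm, rfl⟩

theorem hankelZ_dirichlet_eq_det_momentHankel (f : ℕ → ℝ) (F : ℤ → ℝ)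
    (hF : ∀ k : ℤ, F k = ∑' m : ℕ, f (m + 1) / (((m + 1 : ℕ) : ℝ)) ^ (k : ℤ)) (n : ℕ) (r : ℤ) :
    hankelZ F n r = (momentHankel (fun m => f (m + 1) / ((m + 1 : ℕ) : ℝ) ^ (2 + r))
      (fun m => ((m + 1 : ℕ) : ℝ)⁻¹) n).det := by
  unfold hankelZ momentHankel
  congr
  ext i j
  rw [show ((i : ℕ) : ℤ) + (j : ℕ) + 2 + r = ((i + j : ℕ) : ℤ) + (2 + r) by push_cast; ring, hF]
  exact tsum_congr fun m => div_zpow_natCast_add _ (Nat.cast_ne_zero.mpr m.succ_ne_zero) _ _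

theorem hankel_nondegenerate_pos (f : ℕ → ℝ) (s₀ : ℝ)
    (hf : ∀ n, 0 ≤ f n)
    (hconv : ∀ s : ℝ, s₀ ≤ s → Summable (fun m : ℕ => f (m + 1) / ((m + 1 : ℕ) : ℝ) ^ s))
    (hinf : {n : ℕ | f n ≠ 0}.Infinite)
    (F : ℤ → ℝ) (hF : ∀ k : ℤ, F k = ∑' m : ℕ, f (m + 1) / (((m + 1 : ℕ) : ℝ)) ^ (k : ℤ)) :
    ∀ n ≥ 1, ∀ r : ℤ, (r : ℝ) ≥ s₀ - 2 → 0 < hankelZ F n r := by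
  intro n _ r hr
  set c : ℕ → ℝ := fun m => f (m + 1) / ((m + 1 : ℕ) : ℝ) ^ (2 + r)
  set t : ℕ → ℝ := fun m => ((m + 1 : ℕ) : ℝ)⁻¹
  have hc : 0 ≤ c := fun m => div_nonneg (hf _) (by positivity)
  have ht : Function.Injective t := fun a b h => by simpa [t] using h
  have hsupp : (Function.support c).Infinite := by
    convert infinite_support_comp_succ (f := f) hinf using 1
    ext m
    have hpow : ((m : ℝ) + 1) ^ (2 + r) ≠ 0 := by positivity
    simp [c, hpow]
  have hsum (k : ℕ) : Summable fun m => c m * t m ^ k := by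
    have hs : s₀ ≤ (((k : ℤ) + (2 + r) : ℤ) : ℝ) := by
      push_cast
      linarith [k.cast_nonneg (α := ℝ)]
    refine (hconv _ hs).congr fun m => ?_
    rw [Real.rpow_intCast]
    exact div_zpow_natCast_add _ (Nat.cast_ne_zero.mpr m.succ_ne_zero) k _
  rw [hankelZ_dirichlet_eq_det_momentHankel f F hF]
  exact (posDef_momentHankel hc ht hsupp hsum n).det_pos
end

section
/- Let F(s) = Σ_{n≥1} f(n) n^{-s} be a nondegenerate ordinary Dirichlet series with f(n) ≥ 0, convergent for Re(s) ≥ s₀. Let N < M be the two minimal indices of nonzero coefficients and suppose N > 1. With α = log M / log N, then lim_{s→∞} (f(N) N^{(α−1)s}/(f(M)(1 − N^{1−α}))) · (1 − N·F(s+1)/F(s)) = 1, where the limit is over real s → ∞. -/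
/-!
Past its two leading terms the series is `O((M + 1) ^ (-s))`, so
`F s = f N / N ^ s + f M / M ^ s + o(M ^ (-s))`. Hence `F s * N ^ s → f N`, while in
`F s - N * F (s + 1)` the `N ^ (-s)` terms cancel and `(F s - N * F (s + 1)) * M ^ s` tends to
`f M * (1 - N / M)`. As `N ^ (α - 1) = M / N`, the expression of the theorem is the product of
`f N / (F s * N ^ s)` and `(F s - N * F (s + 1)) * M ^ s / (f M * (1 - N / M))`.
-/

open Filter Real Topology

noncomputable def dirichletTail (f : ℕ → ℝ) (K : ℕ) (s : ℝ) : ℝ :=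
  ∑' m : ℕ, f (m + K + 1) / ((m + K + 1 : ℕ) : ℝ) ^ s

section DirichletTail

variable (f : ℕ → ℝ) (K : ℕ) {s₀ : ℝ}

theorem abs_dirichletTail_le
    (hs₀ : Summable fun m : ℕ => f (m + 1) / ((m + 1 : ℕ) : ℝ) ^ s₀) {s : ℝ} (hs : s₀ ≤ s) :
    |dirichletTail f K s| ≤
      ((K : ℝ) + 1) ^ (s₀ - s) * ∑' m : ℕ, |f (m + K + 1) / ((m + K + 1 : ℕ) : ℝ) ^ s₀| := by
  have htail : Summable fun m : ℕ => |f (m + K + 1) / ((m + K + 1 : ℕ) : ℝ) ^ s₀| :=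
    ((summable_nat_add_iff K).2 hs₀).abs
  rw [← Real.norm_eq_abs, dirichletTail]
  refine tsum_of_norm_bounded (htail.hasSum.mul_left (((K : ℝ) + 1) ^ (s₀ - s))) fun m => ?_
  have hn : (0 : ℝ) < ((m + K + 1 : ℕ) : ℝ) := by positivity
  have hKn : (K : ℝ) + 1 ≤ ((m + K + 1 : ℕ) : ℝ) := by push_cast; linarith [m.cast_nonneg (α := ℝ)]
  calc ‖f (m + K + 1) / ((m + K + 1 : ℕ) : ℝ) ^ s‖
      = ((m + K + 1 : ℕ) : ℝ) ^ (s₀ - s) * |f (m + K + 1) / ((m + K + 1 : ℕ) : ℝ) ^ s₀| := by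
        rw [Real.norm_eq_abs, abs_div, abs_div, abs_of_pos (rpow_pos_of_pos hn s),
          abs_of_pos (rpow_pos_of_pos hn s₀), rpow_sub hn]
        field_simp
    _ ≤ ((K : ℝ) + 1) ^ (s₀ - s) * |f (m + K + 1) / ((m + K + 1 : ℕ) : ℝ) ^ s₀| :=
        mul_le_mul_of_nonneg_right
          (rpow_le_rpow_of_nonpos (by positivity) hKn (by linarith)) (abs_nonneg _)

theorem tendsto_dirichletTail_mul_rpow
    (hs₀ : Summable fun m : ℕ => f (m + 1) / ((m + 1 : ℕ) : ℝ) ^ s₀) {b : ℝ} (hb : 0 < b)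
    (hbK : b < K + 1) :
    Tendsto (fun s => dirichletTail f K s * b ^ s) atTop (𝓝 0) := by
  set C := ∑' m : ℕ, |f (m + K + 1) / ((m + K + 1 : ℕ) : ℝ) ^ s₀|
  have hK : (0 : ℝ) < K + 1 := by positivity
  have hgeom : Tendsto (fun s : ℝ => C * ((K : ℝ) + 1) ^ s₀ * (b / (K + 1)) ^ s) atTop (𝓝 0) := by
    simpa using (tendsto_rpow_atTop_of_base_lt_one _ (by linarith [div_pos hb hK])
      ((div_lt_one hK).2 hbK)).const_mul (C * ((K : ℝ) + 1) ^ s₀)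
  refine squeeze_zero_norm' ?_ hgeom
  filter_upwards [eventually_ge_atTop s₀] with s hs
  calc ‖dirichletTail f K s * b ^ s‖ = |dirichletTail f K s| * b ^ s := by
        rw [norm_mul, Real.norm_eq_abs, Real.norm_eq_abs, abs_of_pos (rpow_pos_of_pos hb s)]
    _ ≤ ((K : ℝ) + 1) ^ (s₀ - s) * C * b ^ s := by
        gcongr
        exact abs_dirichletTail_le f K hs₀ hs
    _ = C * ((K : ℝ) + 1) ^ s₀ * (b / (K + 1)) ^ s := by
        rw [div_rpow hb.le hK.le, rpow_sub hK]
        field_simp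

end DirichletTail

theorem tsum_eq_add_add_dirichletTail (f : ℕ → ℝ) {N M : ℕ} {s : ℝ}
    (hs : Summable fun m : ℕ => f (m + 1) / ((m + 1 : ℕ) : ℝ) ^ s)
    (hN : 1 ≤ N) (hNM : N < M)
    (hminN : ∀ m : ℕ, 1 ≤ m → m < N → f m = 0)
    (hminM : ∀ m : ℕ, N < m → m < M → f m = 0) :
    ∑' m : ℕ, f (m + 1) / ((m + 1 : ℕ) : ℝ) ^ s =
      f N / (N : ℝ) ^ s + f M / (M : ℝ) ^ s + dirichletTail f M s := by
  rw [← hs.sum_add_tsum_nat_add M, dirichletTail,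
    Finset.sum_eq_add_of_mem (N - 1) (M - 1) (by simp; omega) (by simp; omega) (by omega)]
  · rw [Nat.sub_add_cancel hN, Nat.sub_add_cancel (hN.trans hNM.le)]
  · intro i hi hiNM
    rw [Finset.mem_range] at hi
    have : f (i + 1) = 0 := by
      rcases lt_or_gt_of_ne (show i + 1 ≠ N by omega) with h | h
      · exact hminN _ (by omega) h
      · exact hminM _ h (by omega)
    rw [this, zero_div]

section TwoLeadingTerms

variable {F R : ℝ → ℝ} {a b N M : ℝ}

theorem tendsto_mul_rpow_of_eventually_eq (hN : 0 < N) (hNM : N < M)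
    (hF : ∀ᶠ s in atTop, F s = a / N ^ s + b / M ^ s + R s)
    (hR : Tendsto (fun s => R s * N ^ s) atTop (𝓝 0)) :
    Tendsto (fun s => F s * N ^ s) atTop (𝓝 a) := by
  have hM : 0 < M := hN.trans hNM
  have hratio : Tendsto (fun s : ℝ => (N / M) ^ s) atTop (𝓝 0) :=
    tendsto_rpow_atTop_of_base_lt_one _ (by linarith [div_pos hN hM]) ((div_lt_one hM).2 hNM)
  have hlim := (tendsto_const_nhds (x := a)).add ((hratio.const_mul b).add hR)
  rw [mul_zero, zero_add, add_zero] at hlim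
  refine hlim.congr' ?_
  filter_upwards [hF] with s hs
  rw [hs, div_rpow hN.le hM.le]
  have := (rpow_pos_of_pos hN s).ne'
  have := (rpow_pos_of_pos hM s).ne'
  field_simp
  ring

/-- The operator `F ↦ F - N • F(· + 1)` kills the leading term `a / N ^ s`. -/
theorem tendsto_sub_mul_shift_mul_rpow (hN : 0 < N) (hM : 0 < M)
    (hF : ∀ᶠ s in atTop, F s = a / N ^ s + b / M ^ s + R s)
    (hR : Tendsto (fun s => R s * M ^ s) atTop (𝓝 0)) :
    Tendsto (fun s => (F s - N * F (s + 1)) * M ^ s) atTop (𝓝 (b * (1 - N / M))) := by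
  have hR1 : Tendsto (fun s => R (s + 1) * M ^ (s + 1)) atTop (𝓝 0) :=
    hR.comp (tendsto_atTop_add_const_right atTop 1 tendsto_id)
  have hlim := ((tendsto_const_nhds (x := b * (1 - N / M))).add hR).sub (hR1.const_mul (N / M))
  rw [mul_zero, add_zero, sub_zero] at hlim
  refine hlim.congr' ?_
  filter_upwards [hF, (tendsto_atTop_add_const_right atTop 1 tendsto_id).eventually hF]
    with s hs hs1
  simp only [id] at hs1
  rw [hs, hs1, rpow_add_one hN.ne', rpow_add_one hM.ne']
  have := (rpow_pos_of_pos hN s).ne'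
  have := (rpow_pos_of_pos hM s).ne'
  field_simp
  ring

theorem rpow_logb_sub_one (hN : 0 < N) (hN1 : N ≠ 1) (hM : 0 < M) :
    N ^ (log M / log N - 1) = M / N := by
  rw [rpow_sub_one hN.ne', ← logb, rpow_logb hN hN1 hM]

theorem tendsto_ratio_of_eventually_eq (hN : 0 < N) (hN1 : N ≠ 1) (hNM : N < M)
    (ha : a ≠ 0) (hb : b ≠ 0)
    (hF : ∀ᶠ s in atTop, F s = a / N ^ s + b / M ^ s + R s)
    (hRN : Tendsto (fun s => R s * N ^ s) atTop (𝓝 0))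
    (hRM : Tendsto (fun s => R s * M ^ s) atTop (𝓝 0)) :
    Tendsto (fun s => (a * N ^ ((log M / log N - 1) * s) / (b * (1 - N ^ (1 - log M / log N)))) *
      (1 - N * (F (s + 1) / F s))) atTop (𝓝 1) := by
  have hM : 0 < M := hN.trans hNM
  have hc : b * (1 - N / M) ≠ 0 := mul_ne_zero hb (sub_ne_zero.2 ((div_lt_one hM).2 hNM).ne')
  have hlead := tendsto_mul_rpow_of_eventually_eq hN hNM hF hRN
  have hlim := ((tendsto_const_nhds (x := a)).div hlead ha).mul
    ((tendsto_sub_mul_shift_mul_rpow hN hM hF hRM).div_const (b * (1 - N / M)))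
  rw [div_self ha, div_self hc, mul_one] at hlim
  refine hlim.congr' ?_
  filter_upwards [hlead.eventually_ne ha] with s hs
  have hFs : F s ≠ 0 := left_ne_zero_of_mul hs
  have hpow : N ^ ((log M / log N - 1) * s) = M ^ s / N ^ s := by
    rw [rpow_mul hN.le, rpow_logb_sub_one hN hN1 hM, div_rpow hM.le hN.le]
  have hpow' : N ^ (1 - log M / log N) = N / M := by
    rw [← neg_sub, rpow_neg hN.le, rpow_logb_sub_one hN hN1 hM, inv_div]
  rw [hpow, hpow', Pi.div_apply]
  have := (rpow_pos_of_pos hN s).ne'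
  field_simp

end TwoLeadingTerms

theorem ratio_asymptotic_N_gt_one_general (f : ℕ → ℝ) (s₀ : ℝ) (N M : ℕ)
    (hconv : ∀ s : ℝ, s₀ ≤ s → Summable (fun m : ℕ => f (m + 1) / ((m + 1 : ℕ) : ℝ) ^ s))
    (hN : 1 < N) (hNM : N < M) (hfN : f N ≠ 0) (hfM : f M ≠ 0)
    (hminN : ∀ m : ℕ, 1 ≤ m → m < N → f m = 0)
    (hminM : ∀ m : ℕ, N < m → m < M → f m = 0)
    (F : ℝ → ℝ) (hF : ∀ s : ℝ, F s = ∑' m : ℕ, f (m + 1) / (((m + 1 : ℕ) : ℝ)) ^ s) :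
    Tendsto (fun s : ℝ =>
        (f N * (N : ℝ) ^ ((Real.log M / Real.log N - 1) * s) /
          (f M * (1 - (N : ℝ) ^ (1 - Real.log M / Real.log N)))) *
          (1 - (N : ℝ) * (F (s + 1) / F s)))
      atTop (nhds 1) := by
  have hN' : (1 : ℝ) < N := by exact_mod_cast hN
  have hNM' : (N : ℝ) < M := by exact_mod_cast hNM
  have hdec : ∀ᶠ s in atTop,
      F s = f N / (N : ℝ) ^ s + f M / (M : ℝ) ^ s + dirichletTail f M s := by
    filter_upwards [eventually_ge_atTop s₀] with s hs
    rw [hF, tsum_eq_add_add_dirichletTail f (hconv s hs) hN.le hNM hminN hminM]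
  have hs₀ := hconv s₀ le_rfl
  exact tendsto_ratio_of_eventually_eq (by linarith) hN'.ne' hNM' hfN hfM hdec
    (tendsto_dirichletTail_mul_rpow f M hs₀ (by linarith) (by linarith))
    (tendsto_dirichletTail_mul_rpow f M hs₀ (by linarith) (by linarith))

theorem ratio_asymptotic_N_gt_one (f : ℕ → ℝ) (s₀ : ℝ) (N M : ℕ)
    (hf : ∀ n, 0 ≤ f n)
    (hconv : ∀ s : ℝ, s₀ ≤ s → Summable (fun m : ℕ => f (m + 1) / ((m + 1 : ℕ) : ℝ) ^ s))
    (hinf : {n : ℕ | f n ≠ 0}.Infinite)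
    (hN : 1 < N) (hNM : N < M) (hfN : f N ≠ 0) (hfM : f M ≠ 0)
    (hminN : ∀ m : ℕ, 1 ≤ m → m < N → f m = 0)
    (hminM : ∀ m : ℕ, N < m → m < M → f m = 0)
    (F : ℝ → ℝ) (hF : ∀ s : ℝ, F s = ∑' m : ℕ, f (m + 1) / (((m + 1 : ℕ) : ℝ)) ^ s) :
    Tendsto (fun s : ℝ =>
        (f N * (N : ℝ) ^ ((Real.log M / Real.log N - 1) * s) /
          (f M * (1 - (N : ℝ) ^ (1 - Real.log M / Real.log N)))) *
          (1 - (N : ℝ) * (F (s + 1) / F s)))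
      atTop (nhds 1) :=
  ratio_asymptotic_N_gt_one_general f s₀ N M hconv hN hNM hfN hfM hminN hminM F hF
end

section
/- Let F(s) = Σ_{n≥1} f(n) n^{-s} be a nondegenerate ordinary Dirichlet series with f(n) ≥ 0, convergent for Re(s) ≥ s₀, with f(1) ≠ 0, and let M be the second smallest index with f(M) ≠ 0. Then there exist constants c₁ > 0 and K₁ ≥ s₀ such that for all real s ≥ K₁: 0 < 1 − c₁/M^s ≤ F(s+1)/F(s) < 1. -/
open Real Filter

/-!
Write `F(s) = ∑ f(n) n^{-s}`. Since `f(n) = 0` for `1 < n < M`, the difference `F(s) - F(s+1)`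
only involves indices `n ≥ M`, and each such term is at most `f(n) n^{-s} ≤ f(n) n^{-s₀} M^{s₀-s}`.
Hence `F(s) - F(s+1) ≤ F(s₀) M^{s₀} / M^s`, while `F(s) ≥ f(1) > 0`; dividing gives the lower
bound with `c₁ = F(s₀) M^{s₀} / f(1)`. The ratio is `< 1` because the term of index `M` strictly
decreases.
-/

/-- The term of index `m + 1` of `∑ f(n) n^{-s}`, so that sums start at `m = 0`. -/
noncomputable def dirichletTerm (f : ℕ → ℝ) (s : ℝ) (m : ℕ) : ℝ :=
  f (m + 1) / ((m + 1 : ℕ) : ℝ) ^ s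

section

variable {f : ℕ → ℝ} {M m : ℕ} {s t : ℝ}

lemma dirichletTerm_zero (f : ℕ → ℝ) (s : ℝ) : dirichletTerm f s 0 = f 1 := by
  simp [dirichletTerm]

lemma dirichletTerm_nonneg (hf : ∀ n, 0 ≤ f n) (s : ℝ) (m : ℕ) : 0 ≤ dirichletTerm f s m :=
  div_nonneg (hf _) (by positivity)

lemma dirichletTerm_antitone (hf : ∀ n, 0 ≤ f n) (m : ℕ) :
    Antitone fun s => dirichletTerm f s m := by
  intro s t hst
  have hm1 : (1 : ℝ) ≤ ((m + 1 : ℕ) : ℝ) := by exact_mod_cast Nat.succ_pos m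
  exact div_le_div_of_nonneg_left (hf _) (by positivity) (rpow_le_rpow_of_exponent_le hm1 hst)

lemma dirichletTerm_strictAnti (hfm : 0 < f (m + 1)) (hm : 0 < m) :
    StrictAnti fun s => dirichletTerm f s m := by
  intro s t hst
  have hm1 : (1 : ℝ) < ((m + 1 : ℕ) : ℝ) := by exact_mod_cast Nat.succ_lt_succ hm
  exact div_lt_div_of_pos_left hfm (by positivity) (rpow_lt_rpow_of_exponent_lt hm1 hst)

lemma dirichletTerm_eq_mul_rpow (f : ℕ → ℝ) (s t : ℝ) (m : ℕ) :
    dirichletTerm f t m = dirichletTerm f s m * ((m + 1 : ℕ) : ℝ) ^ (s - t) := by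
  unfold dirichletTerm
  rw [rpow_sub (by positivity)]
  field_simp

lemma dirichletTerm_le_mul_rpow (hf : ∀ n, 0 ≤ f n) (hM : 0 < M) (hm : M ≤ m + 1) (hst : s ≤ t) :
    dirichletTerm f t m ≤ dirichletTerm f s m * (M : ℝ) ^ (s - t) := by
  rw [dirichletTerm_eq_mul_rpow f s t m]
  exact mul_le_mul_of_nonneg_left (rpow_le_rpow_of_nonpos (by exact_mod_cast hM)
    (by exact_mod_cast hm) (by linarith)) (dirichletTerm_nonneg hf s m)

lemma dirichletTerm_eq_of_lt (hmin : ∀ n, 1 < n → n < M → f n = 0) (hm : m + 1 < M) (s t : ℝ) :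
    dirichletTerm f s m = dirichletTerm f t m := by
  rcases Nat.eq_zero_or_pos m with rfl | hm0
  · simp only [dirichletTerm_zero]
  · simp [dirichletTerm, hmin (m + 1) (by omega) hm]

lemma dirichletTerm_sub_succ_le (hf : ∀ n, 0 ≤ f n) (hM : 0 < M)
    (hmin : ∀ n, 1 < n → n < M → f n = 0) (hst : s ≤ t) (m : ℕ) :
    dirichletTerm f t m - dirichletTerm f (t + 1) m ≤ dirichletTerm f s m * (M : ℝ) ^ (s - t) := by
  rcases lt_or_ge (m + 1) M with hlt | hge
  · rw [dirichletTerm_eq_of_lt hmin hlt t (t + 1), sub_self]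
    exact mul_nonneg (dirichletTerm_nonneg hf s m) (by positivity)
  · linarith [dirichletTerm_nonneg hf (t + 1) m, dirichletTerm_le_mul_rpow hf hM hge hst]

lemma Summable.dirichletTerm_of_le (hf : ∀ n, 0 ≤ f n) (h : Summable (dirichletTerm f s))
    (hst : s ≤ t) : Summable (dirichletTerm f t) :=
  h.of_nonneg_of_le (dirichletTerm_nonneg hf t) fun m => dirichletTerm_antitone hf m hst

lemma apply_one_le_tsum_dirichletTerm (hf : ∀ n, 0 ≤ f n) (h : Summable (dirichletTerm f s)) :
    f 1 ≤ ∑' m, dirichletTerm f s m := by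
  simpa only [dirichletTerm_zero] using h.le_tsum 0 fun m _ => dirichletTerm_nonneg hf s m

lemma tsum_dirichletTerm_lt (hf : ∀ n, 0 ≤ f n) (hM : 1 < M) (hfM : 0 < f M)
    (h : Summable (dirichletTerm f s)) (hst : s < t) :
    ∑' m, dirichletTerm f t m < ∑' m, dirichletTerm f s m := by
  have hfM' : 0 < f (M - 1 + 1) := by rwa [Nat.sub_add_cancel hM.le]
  exact h.tsum_lt_tsum_of_nonneg (i := M - 1) (dirichletTerm_nonneg hf t)
    (fun m => dirichletTerm_antitone hf m hst.le) (dirichletTerm_strictAnti hfM' (by omega) hst)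

lemma tsum_dirichletTerm_sub_succ_le (hf : ∀ n, 0 ≤ f n) (hM : 0 < M)
    (hmin : ∀ n, 1 < n → n < M → f n = 0) (h : Summable (dirichletTerm f s)) (hst : s ≤ t) :
    ∑' m, dirichletTerm f t m - ∑' m, dirichletTerm f (t + 1) m ≤
      (∑' m, dirichletTerm f s m) * (M : ℝ) ^ (s - t) := by
  have ht := h.dirichletTerm_of_le hf hst
  rw [← ht.tsum_sub (ht.dirichletTerm_of_le hf (by linarith)), ← h.tsum_mul_right]
  exact (ht.sub (ht.dirichletTerm_of_le hf (by linarith))).tsum_le_tsum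
    (dirichletTerm_sub_succ_le hf hM hmin hst) (h.mul_right _)

end

lemma one_sub_le_div_of_sub_le_mul {a b c d : ℝ} (hb : 0 < b) (hc : 0 ≤ c) (hab : a ≤ b)
    (h : b - d ≤ c * a) : 1 - c ≤ d / b := by
  rw [le_div_iff₀ hb]
  nlinarith

theorem ratio_bounds_N_eq_one_general (f : ℕ → ℝ) (s₀ : ℝ) (M : ℕ)
    (hf : ∀ n, 0 ≤ f n)
    (hconv : ∀ s : ℝ, s₀ ≤ s → Summable (fun m : ℕ => f (m + 1) / ((m + 1 : ℕ) : ℝ) ^ s))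
    (hf1 : f 1 ≠ 0) (hM : 1 < M) (hfM : f M ≠ 0)
    (hmin : ∀ m : ℕ, 1 < m → m < M → f m = 0)
    (F : ℝ → ℝ) (hF : ∀ s : ℝ, F s = ∑' m : ℕ, f (m + 1) / (((m + 1 : ℕ) : ℝ)) ^ s) :
    ∃ c₁ > 0, ∃ K₁ ≥ s₀, ∀ s ≥ K₁,
      0 < 1 - c₁ / (M : ℝ) ^ s ∧ 1 - c₁ / (M : ℝ) ^ s ≤ F (s + 1) / F s ∧
        F (s + 1) / F s < 1 := by
  have h₀ : Summable (dirichletTerm f s₀) := hconv s₀ le_rfl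
  replace hF : ∀ s, F s = ∑' m, dirichletTerm f s m := hF
  have hf1pos : 0 < f 1 := (hf 1).lt_of_ne' hf1
  have hM' : (1 : ℝ) < M := by exact_mod_cast hM
  have hF1 : ∀ s ≥ s₀, f 1 ≤ F s := fun s hs =>
    (hF s).symm ▸ apply_one_le_tsum_dirichletTerm hf (h₀.dirichletTerm_of_le hf hs)
  set c₁ := F s₀ * (M : ℝ) ^ s₀ / f 1
  have hc₁ : 0 < c₁ := div_pos (mul_pos (hf1pos.trans_le (hF1 s₀ le_rfl)) (by positivity)) hf1pos
  obtain ⟨K, hK⟩ :=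
    eventually_atTop.1 ((tendsto_rpow_atTop_of_base_gt_one _ hM').eventually_gt_atTop c₁)
  refine ⟨c₁, hc₁, max K s₀, le_max_right _ _, fun s hs => ?_⟩
  have hs₀ : s₀ ≤ s := (le_max_right _ _).trans hs
  have hFs : 0 < F s := hf1pos.trans_le (hF1 s hs₀)
  have hMs : (0 : ℝ) < (M : ℝ) ^ s := by positivity
  have hgap : F s - F (s + 1) ≤ c₁ / (M : ℝ) ^ s * f 1 := by
    have := tsum_dirichletTerm_sub_succ_le hf (by omega) hmin h₀ hs₀
    rw [← hF, ← hF, ← hF, rpow_sub (by positivity)] at this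
    convert this using 1
    simp only [c₁]
    field_simp
  refine ⟨sub_pos.2 ((div_lt_one hMs).2 (hK s ((le_max_left _ _).trans hs))),
    one_sub_le_div_of_sub_le_mul hFs (by positivity) (hF1 s hs₀) hgap, (div_lt_one hFs).2 ?_⟩
  rw [hF, hF]
  exact tsum_dirichletTerm_lt hf hM ((hf M).lt_of_ne' hfM) (h₀.dirichletTerm_of_le hf hs₀)
    (by linarith)

theorem ratio_bounds_N_eq_one (f : ℕ → ℝ) (s₀ : ℝ) (M : ℕ)
    (hf : ∀ n, 0 ≤ f n)
    (hconv : ∀ s : ℝ, s₀ ≤ s → Summable (fun m : ℕ => f (m + 1) / ((m + 1 : ℕ) : ℝ) ^ s))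
    (hinf : {n : ℕ | f n ≠ 0}.Infinite)
    (hf1 : f 1 ≠ 0) (hM : 1 < M) (hfM : f M ≠ 0)
    (hmin : ∀ m : ℕ, 1 < m → m < M → f m = 0)
    (F : ℝ → ℝ) (hF : ∀ s : ℝ, F s = ∑' m : ℕ, f (m + 1) / (((m + 1 : ℕ) : ℝ)) ^ s) :
    ∃ c₁ > 0, ∃ K₁ ≥ s₀, ∀ s ≥ K₁,
      0 < 1 - c₁ / (M : ℝ) ^ s ∧ 1 - c₁ / (M : ℝ) ^ s ≤ F (s + 1) / F s ∧
        F (s + 1) / F s < 1 :=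
  ratio_bounds_N_eq_one_general f s₀ M hf hconv hf1 hM hfM hmin F hF
end

section
/- Let F(s) = Σ_{n≥1} f(n) n^{-s} be a nondegenerate ordinary Dirichlet series with f(n) ≥ 0, convergent for Re(s) ≥ s₀. Then H_n^{(r)}[F] > 0 for all n ≥ 1 and r ≥ s₀ − 2, and there exists c > 0 such that log H_n^{(r)}[F] < −c n² for all sufficiently large integers n and r. -/
open Polynomial Finset Matrix Real
open scoped Nat

section MomentMatrix

variable {R : Type*} [CommRing R]

noncomputable def momentMatrix (L : R[X] →ₗ[R] R) (n : ℕ) : Matrix (Fin n) (Fin n) R :=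
  Matrix.of fun i j => L (X ^ ((i : ℕ) + j))

variable [DecidableEq R] (L : R[X] →ₗ[R] R) {n : ℕ}

theorem dotProduct_mulVec_momentMatrix (a b : Fin n → R) :
    a ⬝ᵥ (momentMatrix L n *ᵥ b) = L (ofFn n a * ofFn n b) := by
  rw [ofFn_eq_sum_monomial, ofFn_eq_sum_monomial, sum_mul_sum, map_sum]
  refine sum_congr rfl fun i _ => ?_
  rw [mulVec, dotProduct, mul_sum, map_sum]
  refine sum_congr rfl fun j _ => ?_
  rw [monomial_mul_monomial, ← smul_X_eq_monomial, map_smul, smul_eq_mul, momentMatrix, of_apply]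
  ring

theorem mul_momentMatrix_mul_transpose {p : Fin n → R[X]} (hp : ∀ i, (p i).natDegree < n) :
    of (fun i => toFn n (p i)) * momentMatrix L n * (of fun i => toFn n (p i))ᵀ =
      of fun i j => L (p i * p j) := by
  ext i j
  rw [mul_mul_apply, transpose_transpose]
  change toFn n (p i) ⬝ᵥ (momentMatrix L n *ᵥ toFn n (p j)) = _
  rw [dotProduct_mulVec_momentMatrix, ofFn_comp_toFn_eq_id_of_natDegree_lt (hp i),
    ofFn_comp_toFn_eq_id_of_natDegree_lt (hp j), of_apply]

theorem det_momentMatrix_eq {p : Fin n → R[X]} (hmonic : ∀ i, (p i).Monic)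
    (hdeg : ∀ i, (p i).natDegree = i) :
    (momentMatrix L n).det = (of fun i j => L (p i * p j)).det := by
  have hV : (of fun i => toFn n (p i)).det = 1 := by
    rw [det_of_isLowerTriangular]
    · refine prod_eq_one fun i _ => ?_
      simp [toFn, ← hdeg i, (hmonic i).coeff_natDegree]
    · intro i j hij
      simp only [of_apply, toFn, LinearMap.pi_apply, lcoeff_apply]
      exact coeff_eq_zero_of_natDegree_lt (by rw [hdeg]; exact hij)
  have hn : ∀ i, (p i).natDegree < n := fun i => (hdeg i).trans_lt i.isLt
  rw [← mul_momentMatrix_mul_transpose L hn, det_mul, det_mul, det_transpose, hV, one_mul, mul_one]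

end MomentMatrix

theorem momentMatrix_posDef (L : ℝ[X] →ₗ[ℝ] ℝ) (hL : ∀ p ≠ 0, 0 < L (p * p)) (n : ℕ) :
    (momentMatrix L n).PosDef := by
  refine posDef_iff_dotProduct_mulVec.mpr ⟨?_, fun c hc => ?_⟩
  · ext i j
    simp [momentMatrix, add_comm]
  · rw [star_trivial, dotProduct_mulVec_momentMatrix]
    exact hL _ fun h => hc (injective_ofFn n (h.trans (map_zero _).symm))

theorem Matrix.det_le_of_le_mul {ι R S : Type*} [Fintype ι] [DecidableEq ι] [CommRing R]
    [Nontrivial R] [CommRing S] [LinearOrder S] [IsStrictOrderedRing S]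
    {A : Matrix ι ι R} {abv : AbsoluteValue R S} (a b : ι → S)
    (hA : ∀ i j, abv (A i j) ≤ a i * b j) :
    abv A.det ≤ (Fintype.card ι)! • ((∏ i, a i) * ∏ j, b j) :=
  calc
    abv A.det = abv (∑ σ : Equiv.Perm ι, Equiv.Perm.sign σ • ∏ i, A (σ i) i) :=
      congr_arg abv (det_apply _)
    _ ≤ ∑ σ : Equiv.Perm ι, abv (Equiv.Perm.sign σ • ∏ i, A (σ i) i) := abv.sum_le _ _
    _ = ∑ σ : Equiv.Perm ι, ∏ i, abv (A (σ i) i) :=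
      sum_congr rfl fun σ _ => by rw [abv.map_units_int_smul, abv.map_prod]
    _ ≤ ∑ σ : Equiv.Perm ι, ∏ i, (a (σ i) * b i) :=
      sum_le_sum fun σ _ => prod_le_prod (fun i _ => abv.nonneg _) fun i _ => hA _ _
    _ = (Fintype.card ι)! • ((∏ i, a i) * ∏ j, b j) := by
      simp [prod_mul_distrib, Equiv.prod_comp, Fintype.card_perm]

section DiscreteMoment

variable {w x : ℕ → ℝ}

theorem summable_mul_eval (hw : Summable w) (hx : ∀ m, x m ∈ Set.Icc (-1 : ℝ) 1) (p : ℝ[X]) :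
    Summable fun m => w m * p.eval (x m) := by
  obtain ⟨C, hC⟩ := isCompact_Icc.exists_bound_of_continuousOn p.continuous.continuousOn
  refine hw.abs.mul_right C |>.of_norm_bounded fun m => ?_
  rw [norm_mul, Real.norm_eq_abs]
  exact mul_le_mul_of_nonneg_left (hC _ (hx m)) (abs_nonneg _)

noncomputable def discreteMoment (w x : ℕ → ℝ) (hw : Summable w)
    (hx : ∀ m, x m ∈ Set.Icc (-1 : ℝ) 1) : ℝ[X] →ₗ[ℝ] ℝ where
  toFun p := ∑' m, w m * p.eval (x m)
  map_add' p q := by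
    simp only [eval_add, mul_add]
    exact (summable_mul_eval hw hx p).tsum_add (summable_mul_eval hw hx q)
  map_smul' c p := by
    simp only [eval_smul, smul_eq_mul, RingHom.id_apply, ← tsum_mul_left]
    exact tsum_congr fun m => by ring

variable (hw : Summable w) (hx : ∀ m, x m ∈ Set.Icc (-1 : ℝ) 1)

theorem discreteMoment_apply (p : ℝ[X]) :
    discreteMoment w x hw hx p = ∑' m, w m * p.eval (x m) := rfl

theorem discreteMoment_mul_self_pos (hw0 : ∀ m, 0 ≤ w m) (hxinj : x.Injective)
    (hinf : {m | w m ≠ 0}.Infinite) {p : ℝ[X]} (hp : p ≠ 0) :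
    0 < discreteMoment w x hw hx (p * p) := by
  have hroots : {m | p.eval (x m) = 0}.Finite :=
    (finite_setOfPred_isRoot hp).preimage hxinj.injOn
  obtain ⟨m, hwm, hpm⟩ := (hinf.sdiff hroots).nonempty
  refine (summable_mul_eval hw hx _).tsum_pos (fun k => ?_) m ?_
  · rw [eval_mul]; exact mul_nonneg (hw0 k) (mul_self_nonneg _)
  · rw [eval_mul]; exact mul_pos ((hw0 m).lt_of_ne' hwm) (mul_self_pos.mpr hpm)

theorem abs_discreteMoment_le (hw0 : ∀ m, 0 ≤ w m) {p : ℝ[X]} {B : ℝ}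
    (hp : ∀ m, |p.eval (x m)| ≤ B) : |discreteMoment w x hw hx p| ≤ (∑' m, w m) * B := by
  rw [discreteMoment_apply, ← tsum_mul_right, abs_le, ← tsum_neg]
  have hbound m : |w m * p.eval (x m)| ≤ w m * B := by
    rw [abs_mul, abs_of_nonneg (hw0 m)]; exact mul_le_mul_of_nonneg_left (hp m) (hw0 m)
  constructor
  · exact (hw.mul_right B).neg.tsum_le_tsum (fun m => neg_le_of_abs_le (hbound m))
      (summable_mul_eval hw hx p)
  · exact (summable_mul_eval hw hx p).tsum_le_tsum (fun m => le_of_abs_le (hbound m))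
      (hw.mul_right B)

noncomputable def nodePoly (x : ℕ → ℝ) (j : ℕ) : ℝ[X] := ∏ l ∈ range j, (X - C (x l))

theorem nodePoly_monic (j : ℕ) : (nodePoly x j).Monic :=
  monic_prod_of_monic _ _ fun l _ => monic_X_sub_C (x l)

theorem natDegree_nodePoly (j : ℕ) : (nodePoly x j).natDegree = j := by
  simp [nodePoly, natDegree_prod _ _ fun l _ => X_sub_C_ne_zero (x l)]

theorem abs_eval_nodePoly_le (hx0 : ∀ m, 0 ≤ x m) (hanti : Antitone x) (j m : ℕ) :
    |(nodePoly x j).eval (x m)| ≤ ∏ l ∈ range j, x l := by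
  rw [nodePoly, eval_prod, abs_prod]
  rcases lt_or_ge m j with hmj | hjm
  · rw [prod_eq_zero (mem_range.mpr hmj) (by simp)]
    exact prod_nonneg fun l _ => hx0 l
  · refine prod_le_prod (fun l _ => abs_nonneg _) fun l hl => ?_
    have hlm : x m ≤ x l := hanti ((mem_range.mp hl).le.trans hjm)
    rw [eval_sub, eval_X, eval_C, abs_sub_comm, abs_of_nonneg (sub_nonneg.mpr hlm)]
    linarith [hx0 m]

theorem det_momentMatrix_discreteMoment_le (hw0 : ∀ m, 0 ≤ w m) (hx0 : ∀ m, 0 ≤ x m)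
    (hanti : Antitone x) (n : ℕ) :
    (momentMatrix (discreteMoment w x hw hx) n).det ≤
      n ! * (∑' m, w m) ^ n * (∏ j ∈ range n, ∏ l ∈ range j, x l) ^ 2 := by
  set a : ℕ → ℝ := fun j => ∏ l ∈ range j, x l
  have hentry (i j : Fin n) :
      |discreteMoment w x hw hx (nodePoly x i * nodePoly x j)| ≤ a i * ((∑' m, w m) * a j) := by
    rw [mul_left_comm]
    refine abs_discreteMoment_le hw hx hw0 fun m => ?_
    rw [eval_mul, abs_mul]
    exact mul_le_mul (abs_eval_nodePoly_le hx0 hanti _ _) (abs_eval_nodePoly_le hx0 hanti _ _)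
      (abs_nonneg _) (prod_nonneg fun l _ => hx0 l)
  rw [det_momentMatrix_eq _ (fun i => nodePoly_monic i) (fun i => natDegree_nodePoly i)]
  refine (le_abs_self _).trans ?_
  refine (det_le_of_le_mul (abv := AbsoluteValue.abs) (fun i : Fin n => a i)
    (fun j : Fin n => (∑' m, w m) * a j) hentry).trans_eq ?_
  simp only [Fintype.card_fin, nsmul_eq_mul, prod_mul_distrib, prod_const, card_univ,
    Fin.prod_univ_eq_prod_range (fun i => a i)]
  ring

end DiscreteMoment

theorem Nat.succ_mul_two_pow_le_four_mul_factorial_sq (j : ℕ) :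
    (j + 1) * 2 ^ j ≤ 4 * (j !) ^ 2 := by
  have h2 : 2 ^ j ≤ 2 * j ! := by
    rcases j with _ | k
    · simp
    · rw [pow_succ, mul_comm]
      exact Nat.mul_le_mul_left 2 <| by
        simpa [add_comm] using Nat.factorial_mul_pow_le_factorial (m := 1) (n := k)
  calc (j + 1) * 2 ^ j ≤ 2 ^ j * 2 ^ j := Nat.mul_le_mul_right _ Nat.lt_two_pow_self
    _ ≤ (2 * j !) * (2 * j !) := Nat.mul_le_mul h2 h2
    _ = 4 * (j !) ^ 2 := by ring

theorem factorial_mul_pow_mul_prod_inv_factorial_sq_le {W : ℝ} (hW : 0 ≤ W) (n : ℕ) :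
    n ! * W ^ n * (∏ j ∈ range n, ((j ! : ℕ) : ℝ)⁻¹) ^ 2 ≤ ∏ j ∈ range n, 4 * W / 2 ^ j := by
  rw [← prod_range_add_one_eq_factorial, Nat.cast_prod, ← prod_pow,
    show W ^ n = ∏ _j ∈ range n, W by simp, ← prod_mul_distrib, ← prod_mul_distrib]
  refine prod_le_prod (fun j _ => by positivity) fun j _ => ?_
  have h := Nat.succ_mul_two_pow_le_four_mul_factorial_sq j
  rw [inv_pow, ← div_eq_mul_inv, div_le_div_iff₀ (by positivity) (by positivity)]
  calc ((j + 1 : ℕ) : ℝ) * W * 2 ^ j = W * ((j + 1) * 2 ^ j : ℕ) := by push_cast; ring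
    _ ≤ W * (4 * (j !) ^ 2 : ℕ) := by gcongr
    _ = 4 * W * (j ! : ℝ) ^ 2 := by push_cast; ring

theorem log_prod_div_two_pow {W : ℝ} (hW : 0 < W) (n : ℕ) :
    log (∏ j ∈ range n, W / 2 ^ j) = n * log W - log 2 * (n * (n - 1) / 2) := by
  induction n with
  | zero => simp
  | succ n ih =>
    rw [prod_range_succ, log_mul (prod_pos fun j _ => by positivity).ne' (by positivity), ih,
      log_div hW.ne' (by positivity), log_pow]
    push_cast
    ring

theorem exists_log_prod_div_two_pow_lt {W : ℝ} (hW : 0 < W) :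
    ∃ c > 0, ∃ N₀ : ℕ, ∀ n ≥ N₀, log (∏ j ∈ range n, W / 2 ^ j) < -c * n ^ 2 := by
  have hl : 0 < log 2 := log_pos one_lt_two
  obtain ⟨N₀, hN₀⟩ := exists_nat_gt (4 * |log W| / log 2 + 2)
  refine ⟨log 2 / 4, by positivity, N₀, fun n hn => ?_⟩
  have hn' : 4 * |log W| / log 2 + 2 < n := hN₀.trans_le (by exact_mod_cast hn)
  have hpos : (0 : ℝ) < n := lt_of_le_of_lt (by positivity) hn'
  rw [div_add' _ _ _ hl.ne', div_lt_iff₀ hl] at hn'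
  rw [log_prod_div_two_pow hW]
  nlinarith [le_abs_self (log W)]

noncomputable def recipSucc (m : ℕ) : ℝ := ((m + 1 : ℕ) : ℝ)⁻¹

theorem recipSucc_pos (m : ℕ) : 0 < recipSucc m := by
  unfold recipSucc; positivity

theorem recipSucc_mem_Icc (m : ℕ) : recipSucc m ∈ Set.Icc (-1 : ℝ) 1 :=
  ⟨by linarith [recipSucc_pos m], inv_le_one_of_one_le₀ (by simp)⟩

theorem antitone_recipSucc : Antitone recipSucc := fun l m hlm =>
  inv_anti₀ (by positivity) (by exact_mod_cast Nat.succ_le_succ hlm)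

theorem recipSucc_injective : recipSucc.Injective := fun l m h => by
  simpa [recipSucc] using h

theorem prod_range_recipSucc (j : ℕ) : ∏ l ∈ range j, recipSucc l = ((j ! : ℕ) : ℝ)⁻¹ := by
  rw [← prod_range_add_one_eq_factorial, Nat.cast_prod, ← prod_inv_distrib]
  rfl

noncomputable def dirichletWeight (f : ℕ → ℝ) (r : ℤ) (m : ℕ) : ℝ :=
  f (m + 1) * recipSucc m ^ (r + 2)

theorem dirichletWeight_nonneg {f : ℕ → ℝ} (hf : ∀ n, 0 ≤ f n) (r : ℤ) (m : ℕ) :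
    0 ≤ dirichletWeight f r m :=
  mul_nonneg (hf _) (zpow_pos (recipSucc_pos m) _).le

theorem div_natCast_zpow_eq_mul_recipSucc_zpow (f : ℕ → ℝ) (k : ℤ) (m : ℕ) :
    f (m + 1) / ((m + 1 : ℕ) : ℝ) ^ k = f (m + 1) * recipSucc m ^ k := by
  rw [div_eq_mul_inv, recipSucc, _root_.inv_zpow]

section Dirichlet

variable {f : ℕ → ℝ} {s₀ : ℝ}
  (hconv : ∀ s : ℝ, s₀ ≤ s → Summable (fun m : ℕ => f (m + 1) / ((m + 1 : ℕ) : ℝ) ^ s))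
include hconv

theorem summable_dirichletWeight {r : ℤ} (hr : s₀ - 2 ≤ r) : Summable (dirichletWeight f r) := by
  refine (hconv (r + 2 : ℤ) (by push_cast; linarith)).congr fun m => ?_
  rw [Real.rpow_intCast, div_natCast_zpow_eq_mul_recipSucc_zpow, dirichletWeight]

theorem tsum_dirichletWeight_le (hf : ∀ n, 0 ≤ f n) {R r : ℤ} (hR : s₀ - 2 ≤ R) (hRr : R ≤ r) :
    ∑' m, dirichletWeight f r m ≤ ∑' m, dirichletWeight f R m :=
  (summable_dirichletWeight hconv (hR.trans (by exact_mod_cast hRr))).tsum_le_tsum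
    (fun m => mul_le_mul_of_nonneg_left (zpow_le_zpow_right_of_le_one₀ (recipSucc_pos m)
      (recipSucc_mem_Icc m).2 (by omega)) (hf _))
    (summable_dirichletWeight hconv hR)

variable {F : ℤ → ℝ} (hF : ∀ k : ℤ, F k = ∑' m : ℕ, f (m + 1) / (((m + 1 : ℕ) : ℝ)) ^ (k : ℤ))
include hF

theorem hankelZ_eq_det_momentMatrix {r : ℤ} (hr : s₀ - 2 ≤ r) (n : ℕ) :
    hankelZ F n r = (momentMatrix (discreteMoment (dirichletWeight f r) recipSucc
      (summable_dirichletWeight hconv hr) recipSucc_mem_Icc) n).det := by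
  rw [hankelZ]
  congr 1
  ext i j
  simp only [of_apply, momentMatrix, discreteMoment_apply, hF, eval_pow, eval_X]
  refine tsum_congr fun m => ?_
  rw [div_natCast_zpow_eq_mul_recipSucc_zpow, dirichletWeight, mul_assoc, ← zpow_natCast,
    ← zpow_add₀ (recipSucc_pos m).ne']
  push_cast
  ring_nf

theorem hankelZ_pos (hf : ∀ n, 0 ≤ f n) (hinf : {n : ℕ | f n ≠ 0}.Infinite) {r : ℤ}
    (hr : s₀ - 2 ≤ r) (n : ℕ) : 0 < hankelZ F n r := by
  have hshift : {m | f (m + 1) ≠ 0}.Infinite := fun hfin =>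
    hinf <| ((hfin.image (· + 1)).insert 0).subset fun
      | 0, _ => Set.mem_insert 0 _
      | k + 1, hk => Set.mem_insert_of_mem 0 ⟨k, hk, rfl⟩
  have hweight : {m | dirichletWeight f r m ≠ 0}.Infinite := by
    simpa [dirichletWeight, zpow_ne_zero _ (recipSucc_pos _).ne'] using hshift
  rw [hankelZ_eq_det_momentMatrix hconv hF hr]
  refine (momentMatrix_posDef _ (fun p hp => ?_) n).det_pos
  exact discreteMoment_mul_self_pos _ _ (dirichletWeight_nonneg hf r)
    recipSucc_injective hweight hp

theorem hankelZ_le (hf : ∀ n, 0 ≤ f n) {r : ℤ} (hr : s₀ - 2 ≤ r) (n : ℕ) {W : ℝ}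
    (hW : ∑' m, dirichletWeight f r m ≤ W) :
    hankelZ F n r ≤ ∏ j ∈ range n, 4 * W / 2 ^ j := by
  rw [hankelZ_eq_det_momentMatrix hconv hF hr]
  refine (det_momentMatrix_discreteMoment_le _ _ (dirichletWeight_nonneg hf r)
    (fun m => (recipSucc_pos m).le) antitone_recipSucc n).trans ?_
  simp only [prod_range_recipSucc]
  have hW0 : 0 ≤ ∑' m, dirichletWeight f r m := tsum_nonneg (dirichletWeight_nonneg hf r)
  calc _ ≤ n ! * W ^ n * (∏ j ∈ range n, ((j ! : ℕ) : ℝ)⁻¹) ^ 2 := by gcongr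
    _ ≤ _ := factorial_mul_pow_mul_prod_inv_factorial_sq_le (hW0.trans hW) n

end Dirichlet

theorem hankel_pos_and_log_decay (f : ℕ → ℝ) (s₀ : ℝ)
    (hf : ∀ n, 0 ≤ f n)
    (hconv : ∀ s : ℝ, s₀ ≤ s → Summable (fun m : ℕ => f (m + 1) / ((m + 1 : ℕ) : ℝ) ^ s))
    (hinf : {n : ℕ | f n ≠ 0}.Infinite)
    (F : ℤ → ℝ) (hF : ∀ k : ℤ, F k = ∑' m : ℕ, f (m + 1) / (((m + 1 : ℕ) : ℝ)) ^ (k : ℤ)) :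
    (∀ n ≥ 1, ∀ r : ℤ, (r : ℝ) ≥ s₀ - 2 → 0 < hankelZ F n r) ∧
      ∃ c > 0, ∃ N₀ : ℕ, ∃ R₀ : ℤ, ∀ n ≥ N₀, ∀ r ≥ R₀,
        Real.log (hankelZ F n r) < -c * (n : ℝ) ^ 2 := by
  have hR₀ : s₀ - 2 ≤ (⌈s₀⌉ : ℤ) := by linarith [Int.le_ceil s₀]
  set W := ∑' m, dirichletWeight f ⌈s₀⌉ m + 1
  have hW0 : 0 ≤ ∑' m, dirichletWeight f ⌈s₀⌉ m := tsum_nonneg (dirichletWeight_nonneg hf _)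
  have hW : 0 < 4 * W := by linarith
  obtain ⟨c, hc, N₀, hdecay⟩ := exists_log_prod_div_two_pow_lt hW
  refine ⟨fun n _ r hr => hankelZ_pos hconv hF hf hinf hr n, c, hc, N₀, ⌈s₀⌉, fun n hn r hr => ?_⟩
  have hr' : s₀ - 2 ≤ r := hR₀.trans (by exact_mod_cast hr)
  calc log (hankelZ F n r) ≤ log (∏ j ∈ range n, 4 * W / 2 ^ j) :=
        log_le_log (hankelZ_pos hconv hF hf hinf hr' n) <| hankelZ_le hconv hF hf hr' n <| by
          linarith [tsum_dirichletWeight_le hconv hf hR₀ hr]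
    _ < -c * n ^ 2 := hdecay n hn
end

section
/- For every ε ∈ (0,1) there exists N₀ such that for all n ≥ N₀, the Hankel determinant of the Riemann zeta function at offset 0 satisfies log H_n^{(0)}[ζ] < −n² log(2 − ε). -/
/-- The values of the Riemann zeta function at integer arguments `k ≥ 2`. -/
noncomputable def zetaVal (k : ℕ) : ℝ := ∑' m : ℕ, 1 / ((m + 1 : ℕ) : ℝ) ^ k

/-!
Write `t_m = 1 / (m + 1)` and `u_m = (t_m, t_m², …, t_mⁿ)`. The Hankel matrix `(ζ(i + j + 2))`
is the Gram matrix `∑ₘ u_m u_mᵀ`; it is positive definite because no nonzero polynomial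
`∑ xᵢ Tⁱ⁺¹` of degree `≤ n` vanishes at `n` distinct points `t_m`.

Replacing each `u_m` by its vector of successive differences multiplies the Gram matrix by a
unipotent matrix on both sides, so the determinant is unchanged. The differences
`t_m^(i+1) - t_m^i` vanish at `t_0 = 1` and are at most `2^(1-i) t_m` in absolute value
elsewhere, since there `t_m ≤ 1/2`. Hence the new Gram matrix has entries at most
`4 ζ(2) 2^(-i-j)`, and expanding the determinant over permutations gives
`H_n ≤ n! (4 ζ(2))ⁿ 2^(-n(n-1))`, whose logarithm is `-n² log 2 + O(n log n)`.
-/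

open Matrix Filter Real
open scoped Nat

def succDiff {n : ℕ} (v : Fin (n + 1) → ℝ) : Fin (n + 1) → ℝ :=
  Fin.cons (v 0) fun i => v i.succ - v i.castSucc

@[simp]
theorem succDiff_zero {n : ℕ} (v : Fin (n + 1) → ℝ) : succDiff v 0 = v 0 := rfl

@[simp]
theorem succDiff_succ {n : ℕ} (v : Fin (n + 1) → ℝ) (i : Fin n) :
    succDiff v i.succ = v i.succ - v i.castSucc := rfl

namespace Matrix

theorem abs_det_le_of_abs_le_mul {ι : Type*} [Fintype ι] [DecidableEq ι] (M : Matrix ι ι ℝ)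
    (K : ℝ) (a : ι → ℝ) (hM : ∀ i j, |M i j| ≤ K * a i * a j) :
    |M.det| ≤ (Fintype.card ι)! * K ^ Fintype.card ι * (∏ i, a i) ^ 2 := by
  have hterm (σ : Equiv.Perm ι) : |∏ i, M (σ i) i| ≤ K ^ Fintype.card ι * (∏ i, a i) ^ 2 :=
    calc |∏ i, M (σ i) i| = ∏ i, |M (σ i) i| := Finset.abs_prod _ _
      _ ≤ ∏ i, K * a (σ i) * a i :=
        Finset.prod_le_prod (fun _ _ => abs_nonneg _) fun i _ => hM _ _
      _ = K ^ Fintype.card ι * (∏ i, a i) ^ 2 := by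
        rw [Finset.prod_mul_distrib, Finset.prod_mul_distrib, Equiv.prod_comp, Finset.prod_const,
          Finset.card_univ]
        ring
  calc |M.det| ≤ ∑ σ : Equiv.Perm ι, |Equiv.Perm.sign σ • ∏ i, M (σ i) i| := by
        rw [det_apply]; exact Finset.abs_sum_le_sum_abs _ _
    _ ≤ ∑ _σ : Equiv.Perm ι, K ^ Fintype.card ι * (∏ i, a i) ^ 2 :=
        Finset.sum_le_sum fun σ _ => by simpa [Units.smul_def, abs_unit_intCast] using hterm σ
    _ = _ := by rw [Finset.sum_const, Finset.card_univ, Fintype.card_perm, nsmul_eq_mul, mul_assoc]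

section TsumGram

variable {ι : Type*}

noncomputable def tsumGram (u : ℕ → ι → ℝ) : Matrix ι ι ℝ := of fun i j => ∑' m, u m i * u m j

theorem abs_tsumGram_le {u : ℕ → ι → ℝ} {a : ι → ℝ} {w : ℕ → ℝ}
    (hw : Summable fun m => w m ^ 2) (hu : ∀ m i, |u m i| ≤ a i * w m) (i j : ι) :
    |tsumGram u i j| ≤ (∑' m, w m ^ 2) * a i * a j := by
  refine tsum_of_norm_bounded (f := fun m => u m i * u m j)
    ((hw.hasSum.mul_right (a i)).mul_right (a j)) fun m => ?_
  rw [Real.norm_eq_abs, abs_mul]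
  calc |u m i| * |u m j| ≤ (a i * w m) * (a j * w m) :=
        mul_le_mul (hu m i) (hu m j) (abs_nonneg _) ((abs_nonneg _).trans (hu m i))
    _ = _ := by ring

variable [Fintype ι]

theorem hasSum_sq_dotProduct {u : ℕ → ι → ℝ} (hu : ∀ i j, Summable fun m => u m i * u m j)
    (x : ι → ℝ) : HasSum (fun m => (u m ⬝ᵥ x) ^ 2) (x ⬝ᵥ tsumGram u *ᵥ x) := by
  have h : HasSum (fun m => ∑ i, ∑ j, x i * x j * (u m i * u m j))
      (∑ i, ∑ j, x i * x j * tsumGram u i j) :=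
    hasSum_sum fun i _ => hasSum_sum fun j _ => (hu i j).hasSum.mul_left _
  convert h using 1
  · ext m
    simp only [dotProduct, sq, Finset.sum_mul_sum]
    exact Finset.sum_congr rfl fun i _ => Finset.sum_congr rfl fun j _ => by ring
  · simp only [dotProduct, mulVec, Finset.mul_sum]
    exact Finset.sum_congr rfl fun i _ => Finset.sum_congr rfl fun j _ => by ring

theorem posDef_tsumGram {u : ℕ → ι → ℝ} (hu : ∀ i j, Summable fun m => u m i * u m j)
    (hsep : ∀ x ≠ 0, ∃ m, u m ⬝ᵥ x ≠ 0) : (tsumGram u).PosDef := by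
  refine posDef_iff_dotProduct_mulVec.mpr ⟨?_, fun x hx => ?_⟩
  · ext i j
    simp only [conjTranspose_apply, tsumGram, of_apply, star_trivial, mul_comm]
  · obtain ⟨m, hm⟩ := hsep x hx
    have h := hasSum_sq_dotProduct hu x
    rw [star_trivial, ← h.tsum_eq]
    exact h.summable.tsum_pos (fun _ => sq_nonneg _) m (by positivity)

end TsumGram

theorem det_tsumGram_succDiff {n : ℕ} {u : ℕ → Fin (n + 1) → ℝ}
    (hu : ∀ i j, Summable fun m => u m i * u m j) :
    (tsumGram fun m => succDiff (u m)).det = (tsumGram u).det := by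
  have hdu (i j) : Summable fun m => succDiff (u m) i * u m j := by
    induction i using Fin.cases with
    | zero => exact hu 0 j
    | succ i => simpa only [succDiff_succ, sub_mul] using (hu _ j).sub (hu _ j)
  let B : Matrix (Fin (n + 1)) (Fin (n + 1)) ℝ := of fun i j => ∑' m, succDiff (u m) i * u m j
  have hrow : (tsumGram u).det = B.det := by
    refine det_eq_of_forall_row_eq_smul_add_pred (fun _ => 1) (fun j => rfl) fun i j => ?_
    simp only [tsumGram, B, of_apply, succDiff_succ, sub_mul, one_mul, (hu _ j).tsum_sub (hu _ j),
      sub_add_cancel]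
  have hcol : B.det = (tsumGram fun m => succDiff (u m)).det := by
    refine det_eq_of_forall_col_eq_smul_add_pred (fun _ => 1) (fun i => rfl) fun i j => ?_
    simp only [tsumGram, B, of_apply, succDiff_succ, mul_sub, one_mul,
      (hdu i _).tsum_sub (hdu i _), sub_add_cancel]
  rw [hrow, hcol]

end Matrix

theorem eventually_log_factorial_add_mul_lt (C : ℝ) {δ : ℝ} (hδ : 0 < δ) :
    ∀ᶠ n : ℕ in atTop, log n ! + C * n < δ * n ^ 2 := by
  have hlog : ∀ᶠ n : ℕ in atTop, log n ≤ δ / 2 * n := by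
    filter_upwards [tendsto_natCast_atTop_atTop.eventually
      (isLittleO_log_id_atTop.bound (half_pos hδ))] with n hn
    simpa [abs_le] using (le_abs_self _).trans hn
  have hC : ∀ᶠ n : ℕ in atTop, C < δ / 2 * n :=
    (tendsto_natCast_atTop_atTop.const_mul_atTop (half_pos hδ)).eventually_gt_atTop C
  filter_upwards [hlog, hC, eventually_gt_atTop 0] with n hlog hC hn
  have hfact : log n ! ≤ n * log n := by
    rw [← log_pow]
    exact log_le_log (by positivity) (by exact_mod_cast Nat.factorial_le_pow n)
  have hn : (0 : ℝ) < n := by exact_mod_cast hn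
  nlinarith

namespace HankelZeta

noncomputable def invSucc (m : ℕ) : ℝ := ((m : ℝ) + 1)⁻¹

theorem invSucc_pos (m : ℕ) : 0 < invSucc m := by unfold invSucc; positivity

theorem invSucc_zero : invSucc 0 = 1 := by simp [invSucc]

theorem invSucc_le_half {m : ℕ} (hm : m ≠ 0) : invSucc m ≤ 1 / 2 := by
  rw [invSucc, one_div]
  gcongr
  have : (1 : ℝ) ≤ m := by exact_mod_cast Nat.one_le_iff_ne_zero.mpr hm
  linarith

theorem invSucc_injective : Function.Injective invSucc := by
  intro a b h
  simpa [invSucc] using h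

theorem zetaVal_eq_tsum (k : ℕ) : zetaVal k = ∑' m, invSucc m ^ k := by
  simp [zetaVal, invSucc]

theorem summable_invSucc_pow {k : ℕ} (hk : 2 ≤ k) : Summable fun m => invSucc m ^ k := by
  have := (summable_nat_add_iff 1).mpr (Real.summable_one_div_nat_pow.mpr hk)
  simpa [invSucc] using this

theorem zetaVal_two_pos : 0 < zetaVal 2 := by
  rw [zetaVal_eq_tsum]
  exact (summable_invSucc_pow le_rfl).tsum_pos (fun m => (pow_pos (invSucc_pos m) 2).le) 0
    (pow_pos (invSucc_pos 0) 2)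

noncomputable def powVec (n m : ℕ) : Fin n → ℝ := fun i => invSucc m ^ ((i : ℕ) + 1)

theorem powVec_mul_powVec (n m : ℕ) (i j : Fin n) :
    powVec n m i * powVec n m j = invSucc m ^ ((i : ℕ) + (j : ℕ) + 2) := by
  rw [powVec, powVec, ← pow_add]; ring_nf

theorem summable_powVec_mul (n : ℕ) (i j : Fin n) :
    Summable fun m => powVec n m i * powVec n m j := by
  simpa only [powVec_mul_powVec] using summable_invSucc_pow (by omega)

theorem hankel_zetaVal_eq_det (n : ℕ) : hankel zetaVal n 0 = (tsumGram (powVec n)).det := by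
  rw [hankel]
  congr 1
  ext i j
  simp [tsumGram, powVec_mul_powVec, zetaVal_eq_tsum]

theorem exists_powVec_dotProduct_ne_zero {n : ℕ} {x : Fin n → ℝ} (hx : x ≠ 0) :
    ∃ m, powVec n m ⬝ᵥ x ≠ 0 := by
  by_contra! h
  let W : Matrix (Fin n) (Fin n) ℝ := of fun μ => powVec n μ
  have hW : W = diagonal (fun μ : Fin n => invSucc μ) * vandermonde fun μ => invSucc μ := by
    ext μ i
    simp [W, powVec, vandermonde, pow_succ, mul_comm]
  have hdet : W.det ≠ 0 := by
    rw [hW, det_mul, det_diagonal]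
    refine mul_ne_zero (Finset.prod_ne_zero_iff.mpr fun μ _ => (invSucc_pos μ).ne') ?_
    exact det_vandermonde_ne_zero_iff.mpr (invSucc_injective.comp Fin.val_injective)
  exact hx (eq_zero_of_mulVec_eq_zero hdet (funext fun μ => h μ))

theorem hankel_zetaVal_pos (n : ℕ) : 0 < hankel zetaVal n 0 := by
  rw [hankel_zetaVal_eq_det]
  exact (posDef_tsumGram (summable_powVec_mul n) fun _ => exists_powVec_dotProduct_ne_zero).det_pos

theorem abs_invSucc_pow_sub_le (m k : ℕ) :
    |invSucc m ^ (k + 2) - invSucc m ^ (k + 1)| ≤ (1 / 2) ^ k * invSucc m := by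
  rcases eq_or_ne m 0 with rfl | hm
  · simp [invSucc_zero]
  have ht := invSucc_pos m
  have ht' : invSucc m ≤ 1 / 2 := invSucc_le_half hm
  rw [abs_sub_comm, abs_of_nonneg
    (sub_nonneg.mpr (pow_le_pow_of_le_one ht.le (by linarith) (by omega)))]
  calc invSucc m ^ (k + 1) - invSucc m ^ (k + 2) ≤ invSucc m ^ (k + 1) :=
        sub_le_self _ (pow_pos ht _).le
    _ = invSucc m ^ k * invSucc m := pow_succ _ _
    _ ≤ (1 / 2) ^ k * invSucc m := by gcongr

theorem abs_succDiff_powVec_le (n m : ℕ) (i : Fin (n + 1)) :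
    |succDiff (powVec (n + 1) m) i| ≤ (1 / 2) ^ (i : ℕ) * (2 * invSucc m) := by
  induction i using Fin.cases with
  | zero =>
    rw [succDiff_zero, powVec, Fin.val_zero, zero_add, pow_one, abs_of_pos (invSucc_pos m)]
    linarith [invSucc_pos m]
  | succ k =>
    simp only [succDiff_succ, powVec, Fin.val_succ, Fin.val_castSucc]
    calc _ ≤ (1 / 2) ^ (k : ℕ) * invSucc m := abs_invSucc_pow_sub_le m k
      _ = _ := by ring

theorem hankel_zetaVal_le (n : ℕ) :
    hankel zetaVal n 0 ≤ n ! * (4 * zetaVal 2) ^ n / 2 ^ (n * (n - 1)) := by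
  rcases n with _ | n
  · simp [hankel]
  have hsq : ∑' m, (2 * invSucc m) ^ 2 = 4 * zetaVal 2 := by
    norm_num [mul_pow, tsum_mul_left, zetaVal_eq_tsum]
  have hentry := abs_tsumGram_le
    ((summable_invSucc_pow le_rfl).mul_left 4 |>.congr fun m => by ring)
    (abs_succDiff_powVec_le n)
  rw [hsq] at hentry
  rw [hankel_zetaVal_eq_det, ← det_tsumGram_succDiff (summable_powVec_mul _)]
  refine (le_abs_self _).trans ((abs_det_le_of_abs_le_mul _ _ _ hentry).trans (le_of_eq ?_))
  rw [Fintype.card_fin, Finset.prod_pow_eq_pow_sum, Fin.sum_univ_eq_sum_range (fun i => i),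
    ← pow_mul, ← Finset.sum_range_id_mul_two, _root_.one_div_pow, mul_one_div]

theorem log_hankel_zetaVal_le (n : ℕ) :
    log (hankel zetaVal n 0) ≤ log n ! + n * log (4 * zetaVal 2) - (n ^ 2 - n) * log 2 := by
  have hcast : ((n * (n - 1) : ℕ) : ℝ) = n ^ 2 - n := by
    rcases n with _ | n
    · simp
    · push_cast; ring
  have hζ := zetaVal_two_pos
  calc log (hankel zetaVal n 0) ≤ log (n ! * (4 * zetaVal 2) ^ n / 2 ^ (n * (n - 1))) :=
        log_le_log (hankel_zetaVal_pos n) (hankel_zetaVal_le n)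
    _ = _ := by
      rw [log_div (by positivity) (by positivity), log_mul (by positivity) (by positivity),
        log_pow, log_pow, hcast]

end HankelZeta

open HankelZeta

theorem hankel_zeta_log_decay :
    ∀ ε ∈ Set.Ioo (0 : ℝ) 1, ∃ N₀ : ℕ, ∀ n ≥ N₀,
      Real.log (hankel zetaVal n 0) < -(n : ℝ) ^ 2 * Real.log (2 - ε) := by
  rintro ε ⟨hε0, hε1⟩
  have hδ : 0 < log 2 - log (2 - ε) := sub_pos.mpr (log_lt_log (by linarith) (by linarith))
  obtain ⟨N₀, hN₀⟩ := eventually_atTop.mp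
    (eventually_log_factorial_add_mul_lt (log (4 * zetaVal 2) + log 2) hδ)
  refine ⟨N₀, fun n hn => (log_hankel_zetaVal_le n).trans_lt ?_⟩
  linear_combination hN₀ n hn
end

section
/- Let a, b be positive integers and define ζ_{a,b}(k) = Σ_{m≥1} m^{-(ak+b)}. Suppose for some R > 0 that ζ_{a,b}(k) ∈ ℚ for all integers k ≥ R, and write ζ_{a,b}(k) = p_k/q_k with p_k, q_k coprime positive integers. Then the sequence {q_k}_{k≥R} is unbounded. -/
/-!
Since ζ(n) = 1 + 2⁻ⁿ + 3⁻ⁿ + ⋯ > 1 and ζ(n) → 1 as n → ∞ (dominated convergence against ∑ m⁻²),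
a value p/q of ζ(ak + b) satisfies 1 + 1/q ≤ p/q, so a uniform bound q ≤ B would keep
ζ(ak + b) ≥ 1 + 1/B along the whole progression, contradicting the limit.
-/

/-- Zeta values along the arithmetic progression `a k + b`. -/
noncomputable def zetaAP (a b k : ℕ) : ℝ := ∑' m : ℕ, 1 / ((m + 1 : ℕ) : ℝ) ^ (a * k + b)

open Filter Topology

lemma summable_one_div_nat_succ_pow {n : ℕ} (hn : 2 ≤ n) :
    Summable fun m : ℕ => 1 / ((m + 1 : ℕ) : ℝ) ^ n :=
  (summable_nat_add_iff (f := fun m : ℕ => 1 / (m : ℝ) ^ n) 1).2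
    (Real.summable_one_div_nat_pow.2 hn)

lemma one_div_nat_succ_pow_le {m n : ℕ} (hn : 2 ≤ n) :
    1 / ((m + 1 : ℕ) : ℝ) ^ n ≤ 1 / ((m + 1 : ℕ) : ℝ) ^ 2 := by
  gcongr
  exact_mod_cast Nat.le_add_left 1 m

lemma one_lt_tsum_one_div_nat_succ_pow {n : ℕ} (hn : 2 ≤ n) :
    1 < ∑' m : ℕ, 1 / ((m + 1 : ℕ) : ℝ) ^ n := by
  have hsum := (summable_one_div_nat_succ_pow hn).sum_le_tsum (Finset.range 2)
    (fun m _ => by positivity)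
  rw [Finset.sum_range_succ, Finset.sum_range_one] at hsum
  norm_num at hsum ⊢
  linarith [show (0 : ℝ) < (2 ^ n)⁻¹ by positivity]

lemma tendsto_tsum_one_div_nat_succ_pow_atTop :
    Tendsto (fun n : ℕ => ∑' m : ℕ, 1 / ((m + 1 : ℕ) : ℝ) ^ n) atTop (𝓝 1) := by
  have hterm : ∀ m : ℕ, Tendsto (fun n : ℕ => 1 / ((m + 1 : ℕ) : ℝ) ^ n) atTop
      (𝓝 (if m = 0 then 1 else 0)) := by
    rintro (_ | m)
    · simp
    · simp_rw [← one_div_pow]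
      exact tendsto_pow_atTop_nhds_zero_of_lt_one (by positivity)
        ((div_lt_one (by positivity)).2 (by norm_cast; omega))
  have hbound : ∀ᶠ n in atTop, ∀ m : ℕ,
      ‖1 / ((m + 1 : ℕ) : ℝ) ^ n‖ ≤ 1 / ((m + 1 : ℕ) : ℝ) ^ 2 := by
    filter_upwards [eventually_ge_atTop 2] with n hn m
    rw [Real.norm_of_nonneg (by positivity)]
    exact one_div_nat_succ_pow_le hn
  simpa using tendsto_tsum_of_dominated_convergence (summable_one_div_nat_succ_pow le_rfl)
    hterm hbound

lemma one_add_one_div_le_of_one_lt_div {p q : ℕ} (hq : 0 < q) (h : 1 < (p : ℝ) / q) :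
    1 + 1 / (q : ℝ) ≤ p / q := by
  have hq' : (0 : ℝ) < q := by exact_mod_cast hq
  have hqp : q + 1 ≤ p := by
    rw [one_lt_div hq'] at h
    exact_mod_cast h
  rw [le_div_iff₀ hq', add_mul, one_div_mul_cancel hq'.ne', one_mul]
  exact_mod_cast hqp

theorem zeta_arith_prog_denominators_unbounded_general (a b R : ℕ) (ha : 0 < a)
    (hconv : ∀ k ≥ R, 2 ≤ a * k + b)
    (p q : ℕ → ℕ)
    (hpq : ∀ k ≥ R, 0 < p k ∧ 0 < q k ∧ Nat.Coprime (p k) (q k) ∧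
      zetaAP a b k = (p k : ℝ) / (q k : ℝ)) :
    ∀ B : ℕ, ∃ k ≥ R, B < q k := by
  intro B
  by_contra! hbdd
  have hB : (0 : ℝ) < B := by exact_mod_cast (hpq R le_rfl).2.1.trans_le (hbdd R le_rfl)
  have hlower : ∀ k ≥ R, 1 + 1 / (B : ℝ) ≤ zetaAP a b k := by
    intro k hk
    obtain ⟨-, hq, -, hz⟩ := hpq k hk
    have hgt : 1 < zetaAP a b k := one_lt_tsum_one_div_nat_succ_pow (hconv k hk)
    rw [hz] at hgt ⊢
    calc 1 + 1 / (B : ℝ) ≤ 1 + 1 / (q k : ℝ) := by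
          gcongr
          exact_mod_cast hbdd k hk
      _ ≤ p k / q k := one_add_one_div_le_of_one_lt_div hq hgt
  have hprog : Tendsto (fun k => a * k + b) atTop atTop :=
    tendsto_atTop_mono (fun k => by dsimp; nlinarith) tendsto_id
  have hlim : Tendsto (zetaAP a b) atTop (𝓝 1) :=
    tendsto_tsum_one_div_nat_succ_pow_atTop.comp hprog
  have hone_ge := ge_of_tendsto hlim (eventually_atTop.2 ⟨R, hlower⟩)
  linarith [one_div_pos.2 hB]

theorem zeta_arith_prog_denominators_unbounded (a b R : ℕ) (ha : 0 < a) (hb : 0 < b)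
    (hR : 0 < R) (hconv : ∀ k ≥ R, 2 ≤ a * k + b)
    (p q : ℕ → ℕ)
    (hpq : ∀ k ≥ R, 0 < p k ∧ 0 < q k ∧ Nat.Coprime (p k) (q k) ∧
      zetaAP a b k = (p k : ℝ) / (q k : ℝ)) :
    ∀ B : ℕ, ∃ k ≥ R, B < q k :=
  zeta_arith_prog_denominators_unbounded_general a b R ha hconv p q hpq
end
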